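/- Let f_0,...,f_{m-1} be continuous self-maps of a compact metric space (X,d) and φ continuous on X. Then lim_{r→0} P_r(f_0,...,f_{m-1},φ) = P(f_0,...,f_{m-1},φ): the topological r-pressure of the free semigroup action converges, as r→0, to the topological pressure of the free semigroup action. -/

import Mathlib

open Filter Topology

section FSG

variable {X : Type*}

/-- Apply the maps of the free semigroup action along a word; the first letter of the
list is applied first. -/
def fw {ι : Type*} (f : ι → X → X) (w : List ι) (x : X) : X :=
  w.foldl (fun y a => f a y) x

/-- The Birkhoff-type sum `(S_w φ)(x) = ∑_{w' ≤ w} φ(f_{w'} x)`. -/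
noncomputable def Sw {ι : Type*} (f : ι → X → X) (φ : X → ℝ) (w : List ι) (x : X) : ℝ :=
  ∑ i ∈ Finset.range w.length, φ (fw f (w.take i) x)

variable [MetricSpace X]

/-- `F` is a `(w, ε, r)`-spanning set for the free semigroup action. -/
def rSpan {ι : Type*} (f : ι → X → X) (w : List ι) (ε r : ℝ) (F : Finset X) : Prop :=
  ∀ x : X, ∃ y ∈ F, (1 - r) * w.length <
    (((Finset.range w.length).filter
      (fun i => dist (fw f (w.take i) x) (fw f (w.take i) y) < ε)).card : ℝ)

/-- `E` is a `(w, ε, r)`-separated set for the free semigroup action. -/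
def rSep {ι : Type*} (f : ι → X → X) (w : List ι) (ε r : ℝ) (E : Finset X) : Prop :=
  ∀ x ∈ E, ∀ y ∈ E, x ≠ y → r * w.length <
    (((Finset.range w.length).filter
      (fun i => ε ≤ dist (fw f (w.take i) x) (fw f (w.take i) y))).card : ℝ)

/-- `Q_w(f_0,…,f_{m-1},φ,ε,r)` (spanning-set version). -/
noncomputable def Qw {ι : Type*} (f : ι → X → X) (φ : X → ℝ) (w : List ι) (ε r : ℝ) : ℝ :=
  sInf {s : ℝ | ∃ F : Finset X, rSpan f w ε r F ∧ s = ∑ x ∈ F, Real.exp (Sw f φ w x)}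

/-- `Q_w^s(f_0,…,f_{m-1},φ,ε,r)` (separated-set version). -/
noncomputable def Qws {ι : Type*} (f : ι → X → X) (φ : X → ℝ) (w : List ι) (ε r : ℝ) : ℝ :=
  sSup {s : ℝ | ∃ E : Finset X, rSep f w ε r E ∧ s = ∑ x ∈ E, Real.exp (Sw f φ w x)}

/-- `Q_n(f_0,…,f_{m-1},φ,ε,r) = (1/m^n) ∑_{|w|=n} Q_w`. -/
noncomputable def Qn {ι : Type*} [Fintype ι] (f : ι → X → X) (φ : X → ℝ)
    (n : ℕ) (ε r : ℝ) : ℝ :=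
  (1 / (Fintype.card ι : ℝ) ^ n) * ∑ σ : Fin n → ι, Qw f φ (List.ofFn σ) ε r

/-- `Q_n^s(f_0,…,f_{m-1},φ,ε,r) = (1/m^n) ∑_{|w|=n} Q_w^s`. -/
noncomputable def Qns {ι : Type*} [Fintype ι] (f : ι → X → X) (φ : X → ℝ)
    (n : ℕ) (ε r : ℝ) : ℝ :=
  (1 / (Fintype.card ι : ℝ) ^ n) * ∑ σ : Fin n → ι, Qws f φ (List.ofFn σ) ε r

/-- The topological `r`-pressure of the free semigroup action (spanning sets);
the limit as `ε → 0` is realised as a supremum over `ε > 0`, the quantity being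
monotone in `ε`. -/
noncomputable def Pr {ι : Type*} [Fintype ι] (f : ι → X → X) (φ : X → ℝ) (r : ℝ) : EReal :=
  ⨆ ε ∈ Set.Ioi (0 : ℝ), atTop.limsup fun n : ℕ =>
    (((n : ℝ)⁻¹ * Real.log (Qn f φ n ε r) : ℝ) : EReal)

/-- `P^s_r(f_0,…,f_{m-1},φ,ε)`, the fixed-`ε` separated-set `r`-pressure. -/
noncomputable def Pse {ι : Type*} [Fintype ι] (f : ι → X → X) (φ : X → ℝ) (ε r : ℝ) : EReal :=
  atTop.limsup fun n : ℕ => (((n : ℝ)⁻¹ * Real.log (Qns f φ n ε r) : ℝ) : EReal)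

/-- The topological `r`-pressure of the free semigroup action (separated sets). -/
noncomputable def Ps {ι : Type*} [Fintype ι] (f : ι → X → X) (φ : X → ℝ) (r : ℝ) : EReal :=
  ⨆ ε ∈ Set.Ioi (0 : ℝ), Pse f φ ε r

/-- Liminf variant of the separated-set topological `r`-pressure. -/
noncomputable def PsInf {ι : Type*} [Fintype ι] (f : ι → X → X) (φ : X → ℝ) (r : ℝ) : EReal :=
  ⨆ ε ∈ Set.Ioi (0 : ℝ), atTop.liminf fun n : ℕ =>
    (((n : ℝ)⁻¹ * Real.log (Qns f φ n ε r) : ℝ) : EReal)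

/-- `F` is a `(w, ε)`-spanning set for the Bowen metric `d_w` of the free semigroup action. -/
def span0 {ι : Type*} (f : ι → X → X) (w : List ι) (ε : ℝ) (F : Finset X) : Prop :=
  ∀ x : X, ∃ y ∈ F, ∀ i < w.length,
    dist (fw f (w.take i) x) (fw f (w.take i) y) ≤ ε

/-- `E` is a `(w, ε)`-separated set for the Bowen metric `d_w`. -/
def sep0 {ι : Type*} (f : ι → X → X) (w : List ι) (ε : ℝ) (E : Finset X) : Prop :=
  ∀ x ∈ E, ∀ y ∈ E, x ≠ y → ∃ i < w.length,
    ε < dist (fw f (w.take i) x) (fw f (w.take i) y)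

noncomputable def Qw0 {ι : Type*} (f : ι → X → X) (φ : X → ℝ) (w : List ι) (ε : ℝ) : ℝ :=
  sInf {s : ℝ | ∃ F : Finset X, span0 f w ε F ∧ s = ∑ x ∈ F, Real.exp (Sw f φ w x)}

noncomputable def Qws0 {ι : Type*} (f : ι → X → X) (φ : X → ℝ) (w : List ι) (ε : ℝ) : ℝ :=
  sSup {s : ℝ | ∃ E : Finset X, sep0 f w ε E ∧ s = ∑ x ∈ E, Real.exp (Sw f φ w x)}

noncomputable def Qn0 {ι : Type*} [Fintype ι] (f : ι → X → X) (φ : X → ℝ) (n : ℕ) (ε : ℝ) : ℝ :=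
  (1 / (Fintype.card ι : ℝ) ^ n) * ∑ σ : Fin n → ι, Qw0 f φ (List.ofFn σ) ε

noncomputable def Qns0 {ι : Type*} [Fintype ι] (f : ι → X → X) (φ : X → ℝ) (n : ℕ) (ε : ℝ) : ℝ :=
  (1 / (Fintype.card ι : ℝ) ^ n) * ∑ σ : Fin n → ι, Qws0 f φ (List.ofFn σ) ε

/-- The topological pressure of the free semigroup action. -/
noncomputable def P0 {ι : Type*} [Fintype ι] (f : ι → X → X) (φ : X → ℝ) : EReal :=
  ⨆ ε ∈ Set.Ioi (0 : ℝ), atTop.limsup fun n : ℕ =>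
    (((n : ℝ)⁻¹ * Real.log (Qn0 f φ n ε) : ℝ) : EReal)

/-- `r_w(ε,r)`: the smallest cardinality of a `(w,ε,r)`-spanning set. -/
noncomputable def rSpanCard {ι : Type*} (f : ι → X → X) (w : List ι) (ε r : ℝ) : ℕ :=
  sInf {k : ℕ | ∃ F : Finset X, rSpan f w ε r F ∧ F.card = k}

/-- The topological `r`-entropy of the free semigroup action. -/
noncomputable def hrEnt {ι : Type*} [Fintype ι] (f : ι → X → X) (r : ℝ) : EReal :=
  ⨆ ε ∈ Set.Ioi (0 : ℝ), atTop.limsup fun n : ℕ =>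
    (((n : ℝ)⁻¹ * Real.log ((1 / (Fintype.card ι : ℝ) ^ n) *
      ∑ σ : Fin n → ι, (rSpanCard f (List.ofFn σ) ε r : ℝ)) : ℝ) : EReal)

end FSG

/-!
A `d_w`-spanning set at scale `ε / 2` is `(w, ε, r)`-spanning, so `P_r ≤ P` for every `r > 0`.
Conversely, let `E` be a maximal `(w, ε)`-separated set, hence `(w, ε)`-spanning, and `F` a
`(w, ε / 2, r)`-spanning set, `n = |w|`. Send `x ∈ E` to a point `y ∈ F` shadowing it,
together with the set `A` of shadowing times, `n - #A ≤ r n`. There are at most `e^{n δ(r)}`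
such sets `A`, with `δ(r) → 0`; two points of one fibre are told apart by the points of a fixed
`ε / 2`-net of `X` near their orbits at the times outside `A`, so a fibre has at most
`#net ^ (r n)` points; and `S_w φ` varies on a fibre by at most `n V + r n D`, where `V` is the
oscillation of `φ` on `ε / 2`-balls and `D` its global oscillation. Hence
`Q_w(ε) ≤ e^{n c} Q_w(ε / 2, r)` with `c → V` as `r → 0`, and `V → 0` as `ε → 0` by
uniform continuity.
-/

open Finset

theorem card_powerset_range_filter_le {x : ℝ} (hx0 : 0 < x) (hx1 : x < 1) (n k : ℕ) :
    (#{A ∈ (range n).powerset | n - #A ≤ k} : ℝ) ≤ x⁻¹ ^ k * (1 - x)⁻¹ ^ n := by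
  set C : ℝ := x⁻¹ ^ k * (1 - x)⁻¹ ^ n
  have h1x : 0 < 1 - x := sub_pos.2 hx1
  -- weight `A` by its binomial probability `(1 - x) ^ #A * x ^ (n - #A)`; the weights sum to `1`
  have hweight : ∀ A ∈ {A ∈ (range n).powerset | n - #A ≤ k},
      (1 : ℝ) ≤ C * ((1 - x) ^ #A * x ^ (n - #A)) := by
    intro A hA
    obtain ⟨hAn, hAk⟩ := mem_filter.1 hA
    have hcard : #A ≤ n := by simpa using card_le_card (mem_powerset.1 hAn)
    calc (1 : ℝ) = C * ((1 - x) ^ n * x ^ k) := by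
          simp only [C, inv_pow]; field_simp
      _ ≤ C * ((1 - x) ^ #A * x ^ (n - #A)) := by
          gcongr C * ?_
          exact mul_le_mul (pow_le_pow_of_le_one h1x.le (by linarith) hcard)
            (pow_le_pow_of_le_one hx0.le hx1.le hAk) (by positivity) (by positivity)
  calc (#{A ∈ (range n).powerset | n - #A ≤ k} : ℝ)
      = ∑ A ∈ {A ∈ (range n).powerset | n - #A ≤ k}, (1 : ℝ) := by simp
    _ ≤ ∑ A ∈ {A ∈ (range n).powerset | n - #A ≤ k}, C * ((1 - x) ^ #A * x ^ (n - #A)) :=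
        sum_le_sum hweight
    _ ≤ ∑ A ∈ (range n).powerset, C * ((1 - x) ^ #A * x ^ (n - #A)) :=
        sum_le_sum_of_subset_of_nonneg (filter_subset _ _) fun _ _ _ => by positivity
    _ = C := by
        have hbinom := sum_pow_mul_eq_add_pow (1 - x) x (range n)
        rw [card_range] at hbinom
        rw [← mul_sum, hbinom]
        simp

theorem exists_finset_forall_dist_le {X Y κ : Type*} [TopologicalSpace X] [CompactSpace X]
    [PseudoMetricSpace Y] [Finite κ] {g : κ → X → Y} (hg : ∀ i, Continuous (g i))
    {ε : ℝ} (hε : 0 < ε) :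
    ∃ F : Finset X, ∀ x, ∃ y ∈ F, ∀ i, dist (g i x) (g i y) ≤ ε := by
  let U : X → Set X := fun y => ⋂ i, g i ⁻¹' Metric.ball (g i y) ε
  have hU : ∀ y, IsOpen (U y) := fun y =>
    isOpen_iInter_of_finite fun i => Metric.isOpen_ball.preimage (hg i)
  have hcover : Set.univ ⊆ ⋃ y, U y := fun x _ =>
    Set.mem_iUnion.2 ⟨x, Set.mem_iInter.2 fun i => Metric.mem_ball_self hε⟩
  obtain ⟨F, hF⟩ := isCompact_univ.elim_finite_subcover U hU hcover
  refine ⟨F, fun x => ?_⟩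
  obtain ⟨y, hy, hxy⟩ := Set.mem_iUnion₂.1 (hF (Set.mem_univ x))
  exact ⟨y, hy, fun i => (Set.mem_iInter.1 hxy i).le⟩

theorem exists_finset_forall_exists_dist_le (X : Type*) [PseudoMetricSpace X] [CompactSpace X]
    {ε : ℝ} (hε : 0 < ε) : ∃ s : Finset X, ∀ x, ∃ c ∈ s, dist x c ≤ ε := by
  obtain ⟨s, hs⟩ := exists_finset_forall_dist_le (g := fun (_ : Unit) (x : X) => x)
    (fun _ => continuous_id) hε
  exact ⟨s, fun x => let ⟨c, hc, hxc⟩ := hs x; ⟨c, hc, hxc ()⟩⟩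

noncomputable def growthRate (u : ℕ → ℝ) : EReal :=
  atTop.limsup fun n : ℕ => (((n : ℝ)⁻¹ * Real.log (u n) : ℝ) : EReal)

theorem growthRate_le_add {u v : ℕ → ℝ} {c : ℝ} (hu : ∀ᶠ n in atTop, 0 < u n)
    (huv : ∀ᶠ n in atTop, u n ≤ Real.exp (n * c) * v n) :
    growthRate u ≤ growthRate v + c := by
  have hpointwise : ∀ᶠ n : ℕ in atTop, (((n : ℝ)⁻¹ * Real.log (u n) : ℝ) : EReal) ≤
      (((n : ℝ)⁻¹ * Real.log (v n) : ℝ) : EReal) + c := by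
    filter_upwards [hu, huv, eventually_ge_atTop 1] with n hun huvn hn
    have hvn : 0 < v n := pos_of_mul_pos_right (hun.trans_le huvn) (Real.exp_pos _).le
    have hn' : (0 : ℝ) < n := by exact_mod_cast hn
    have hlog : Real.log (u n) ≤ n * c + Real.log (v n) := by
      calc Real.log (u n) ≤ Real.log (Real.exp (n * c) * v n) := Real.log_le_log hun huvn
        _ = n * c + Real.log (v n) := by
          rw [Real.log_mul (Real.exp_ne_zero _) hvn.ne', Real.log_exp]
    rw [← EReal.coe_add, EReal.coe_le_coe_iff]
    calc (n : ℝ)⁻¹ * Real.log (u n) ≤ (n : ℝ)⁻¹ * (n * c + Real.log (v n)) := by gcongr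
      _ = (n : ℝ)⁻¹ * Real.log (v n) + c := by field_simp; ring
  calc growthRate u
      ≤ atTop.limsup ((fun n : ℕ => (((n : ℝ)⁻¹ * Real.log (v n) : ℝ) : EReal)) +
          fun _ => (c : EReal)) := limsup_le_limsup (hpointwise.mono fun _ h => h)
    _ ≤ growthRate v + atTop.limsup (fun _ : ℕ => (c : EReal)) :=
        EReal.limsup_add_le (Or.inr (by simp)) (Or.inr (by simp))
    _ = growthRate v + c := by rw [limsup_const]

theorem growthRate_mono {u v : ℕ → ℝ} (hu : ∀ᶠ n in atTop, 0 < u n)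
    (huv : ∀ᶠ n in atTop, u n ≤ v n) : growthRate u ≤ growthRate v := by
  simpa using growthRate_le_add (c := 0) hu (by simpa using huv)

theorem growthRate_of_eventually_eq_zero {u : ℕ → ℝ} (hu : ∀ᶠ n in atTop, u n = 0) :
    growthRate u = 0 := by
  have : ∀ᶠ n : ℕ in atTop, (((n : ℝ)⁻¹ * Real.log (u n) : ℝ) : EReal) = 0 := by
    filter_upwards [hu] with n hn
    simp [hn]
  rw [growthRate, limsup_congr this, limsup_const]

noncomputable def wordAvg {ι : Type*} [Fintype ι] (g : List ι → ℝ) (n : ℕ) : ℝ :=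
  (1 / (Fintype.card ι : ℝ) ^ n) * ∑ σ : Fin n → ι, g (List.ofFn σ)

section wordAvg

variable {ι : Type*} [Fintype ι] {g g' : List ι → ℝ} {n : ℕ}

theorem wordAvg_mono (h : ∀ w : List ι, w.length = n → g w ≤ g' w) :
    wordAvg g n ≤ wordAvg g' n :=
  mul_le_mul_of_nonneg_left (sum_le_sum fun σ _ => h _ (List.length_ofFn)) (by positivity)

theorem wordAvg_pos [Nonempty ι] (h : ∀ w : List ι, w.length = n → 0 < g w) :
    0 < wordAvg g n :=
  mul_pos (by simp [Fintype.card_pos])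
    (sum_pos (fun σ _ => h _ (List.length_ofFn)) univ_nonempty)

theorem wordAvg_eq_zero (h : ∀ w : List ι, w.length = n → g w = 0) : wordAvg g n = 0 := by
  simp [wordAvg, h _ List.length_ofFn]

theorem wordAvg_eq_zero_of_isEmpty [IsEmpty ι] (g : List ι → ℝ) (hn : 1 ≤ n) :
    wordAvg g n = 0 :=
  wordAvg_eq_zero fun w hw => isEmptyElim (w.head (List.ne_nil_of_length_pos (by omega)))

theorem wordAvg_const_mul (c : ℝ) : wordAvg (fun w => c * g w) n = c * wordAvg g n := by
  simp only [wordAvg, ← mul_sum]; ring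

end wordAvg

theorem bddBelow_setOf_sum_exp {X : Type*} (P : Finset X → Prop) (g : X → ℝ) :
    BddBelow {s : ℝ | ∃ F : Finset X, P F ∧ s = ∑ x ∈ F, Real.exp (g x)} :=
  ⟨0, by rintro _ ⟨F, -, rfl⟩; positivity⟩

theorem sInf_setOf_sum_exp_of_isEmpty {X : Type*} [IsEmpty X] {P : Finset X → Prop} (hP : P ∅)
    (g : X → ℝ) :
    sInf {s : ℝ | ∃ F : Finset X, P F ∧ s = ∑ x ∈ F, Real.exp (g x)} = 0 := by
  have : {s : ℝ | ∃ F : Finset X, P F ∧ s = ∑ x ∈ F, Real.exp (g x)} = {0} := by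
    ext s
    simp only [Set.mem_ofPred_eq, Set.mem_singleton_iff, Finset.eq_empty_of_isEmpty]
    exact ⟨fun ⟨_, _, hs⟩ => by simpa using hs, fun hs => ⟨∅, hP, by simpa using hs⟩⟩
  rw [this, csInf_singleton]

section Words

variable {X ι : Type*} [MetricSpace X] {f : ι → X → X} {φ : X → ℝ}

theorem continuous_fw (hf : ∀ i, Continuous (f i)) (w : List ι) : Continuous (fw f w) := by
  induction w with
  | nil => exact continuous_id
  | cons a w ih => exact ih.comp (hf a)

theorem exists_span0 [CompactSpace X] (hf : ∀ i, Continuous (f i)) (w : List ι) {ε : ℝ}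
    (hε : 0 < ε) : ∃ F : Finset X, span0 f w ε F := by
  obtain ⟨F, hF⟩ := exists_finset_forall_dist_le
    (g := fun i : Fin w.length => fw f (w.take i)) (fun _ => continuous_fw hf _) hε
  refine ⟨F, fun x => ?_⟩
  obtain ⟨y, hy, hxy⟩ := hF x
  exact ⟨y, hy, fun i hi => hxy ⟨i, hi⟩⟩

theorem span0.mono {w : List ι} {ε ε' : ℝ} {F : Finset X} (hF : span0 f w ε F)
    (hεε' : ε ≤ ε') : span0 f w ε' F := fun x =>
  let ⟨y, hy, hxy⟩ := hF x
  ⟨y, hy, fun i hi => (hxy i hi).trans hεε'⟩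

theorem span0.rSpan {w : List ι} {ε ε' r : ℝ} {F : Finset X} (hF : span0 f w ε' F)
    (hεε' : ε' < ε) (hr : 0 < r) (hw : w ≠ []) : rSpan f w ε r F := by
  intro x
  obtain ⟨y, hy, hxy⟩ := hF x
  refine ⟨y, hy, ?_⟩
  rw [filter_true_of_mem fun i hi => (hxy i (mem_range.1 hi)).trans_lt hεε', card_range]
  have : (0 : ℝ) < w.length := by exact_mod_cast List.length_pos_iff.2 hw
  nlinarith

theorem sep0.subset {w : List ι} {ε : ℝ} {E G : Finset X} (hE : sep0 f w ε E) (hGE : G ⊆ E) :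
    sep0 f w ε G := fun x hx y hy => hE x (hGE hx) y (hGE hy)

variable [CompactSpace X]

theorem exists_pos_le_sum_exp_Sw [Nonempty X] (hf : ∀ i, Continuous (f i)) (hφ : Continuous φ)
    (w : List ι) :
    ∃ c > 0, ∀ F : Finset X, F.Nonempty → c ≤ ∑ x ∈ F, Real.exp (Sw f φ w x) := by
  have hSw : Continuous (Sw f φ w) :=
    continuous_finsetSum _ fun i _ => hφ.comp (continuous_fw hf _)
  obtain ⟨x₀, -, hx₀⟩ := isCompact_univ.exists_isMinOn Set.univ_nonempty hSw.continuousOn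
  refine ⟨Real.exp (Sw f φ w x₀), Real.exp_pos _, fun F ⟨y, hy⟩ => ?_⟩
  calc Real.exp (Sw f φ w x₀) ≤ Real.exp (Sw f φ w y) :=
        Real.exp_le_exp.2 (hx₀ (Set.mem_univ y))
    _ ≤ ∑ x ∈ F, Real.exp (Sw f φ w x) := single_le_sum (fun _ _ => (Real.exp_pos _).le) hy

theorem Qw0_pos [Nonempty X] (hf : ∀ i, Continuous (f i)) (hφ : Continuous φ) (w : List ι)
    {ε : ℝ} (hε : 0 < ε) : 0 < Qw0 f φ w ε := by
  obtain ⟨c, hc, hcF⟩ := exists_pos_le_sum_exp_Sw hf hφ w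
  obtain ⟨F, hF⟩ := exists_span0 hf w hε
  refine hc.trans_le (le_csInf ⟨_, F, hF, rfl⟩ ?_)
  rintro _ ⟨G, hG, rfl⟩
  obtain ⟨y, hy, -⟩ := hG (Classical.arbitrary X)
  exact hcF G ⟨y, hy⟩

theorem Qw_pos [Nonempty X] (hf : ∀ i, Continuous (f i)) (hφ : Continuous φ) {w : List ι}
    (hw : w ≠ []) {ε r : ℝ} (hε : 0 < ε) (hr : 0 < r) : 0 < Qw f φ w ε r := by
  obtain ⟨c, hc, hcF⟩ := exists_pos_le_sum_exp_Sw hf hφ w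
  obtain ⟨F, hF⟩ := exists_span0 hf w (half_pos hε)
  refine hc.trans_le (le_csInf ⟨_, F, hF.rSpan (half_lt_self hε) hr hw, rfl⟩ ?_)
  rintro _ ⟨G, hG, rfl⟩
  obtain ⟨y, hy, -⟩ := hG (Classical.arbitrary X)
  exact hcF G ⟨y, hy⟩

theorem Qw_le_Qw0 (hf : ∀ i, Continuous (f i)) {w : List ι} (hw : w ≠ []) {ε ε' r : ℝ}
    (hε' : 0 < ε') (hεε' : ε' < ε) (hr : 0 < r) : Qw f φ w ε r ≤ Qw0 f φ w ε' := by
  obtain ⟨F, hF⟩ := exists_span0 hf w hε'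
  refine csInf_le_csInf (bddBelow_setOf_sum_exp _ _) ⟨_, F, hF, rfl⟩ ?_
  rintro _ ⟨G, hG, rfl⟩
  exact ⟨G, hG.rSpan hεε' hr hw, rfl⟩

theorem Qw0_anti (hf : ∀ i, Continuous (f i)) (w : List ι) {ε ε' : ℝ} (hε : 0 < ε)
    (hεε' : ε ≤ ε') : Qw0 f φ w ε' ≤ Qw0 f φ w ε := by
  obtain ⟨F, hF⟩ := exists_span0 hf w hε
  refine csInf_le_csInf (bddBelow_setOf_sum_exp _ _) ⟨_, F, hF, rfl⟩ ?_
  rintro _ ⟨G, hG, rfl⟩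
  exact ⟨G, hG.mono hεε', rfl⟩

end Words
section Counting

variable {X ι : Type*} [MetricSpace X] {f : ι → X → X} {φ : X → ℝ}

theorem Sw_sub_Sw_le {w : List ι} {B : Finset ℕ} (hB : B ⊆ range w.length) {x y : X}
    {ε V D : ℝ} (hV : ∀ a b : X, dist a b ≤ ε → φ a - φ b ≤ V)
    (hD : ∀ a b : X, φ a - φ b ≤ D)
    (hxy : ∀ i ∈ B, dist (fw f (w.take i) x) (fw f (w.take i) y) ≤ ε) :
    Sw f φ w x - Sw f φ w y ≤ #B * V + #(range w.length \ B) * D := by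
  rw [Sw, Sw, ← sum_sub_distrib, ← sum_sdiff hB, add_comm]
  gcongr
  · simpa using sum_le_card_nsmul B _ V fun i hi => hV _ _ (hxy i hi)
  · simpa using sum_le_card_nsmul (range w.length \ B) _ D fun i _ => hD _ _

theorem card_le_of_sep0 {w : List ι} {ε : ℝ} {E s : Finset X} {B : Finset ℕ}
    (hE : sep0 f w ε E) (hs : ∀ x, ∃ c ∈ s, dist x c ≤ ε / 2)
    (hB : ∀ x ∈ E, ∀ y ∈ E, ∀ i ∈ B,
      dist (fw f (w.take i) x) (fw f (w.take i) y) ≤ ε) :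
    #E ≤ #s ^ #(range w.length \ B) := by
  classical
  choose c hcs hc using hs
  -- points of `E` are told apart by the net points near their orbits at the times outside `B`
  let code : X → (i : ℕ) → i ∈ range w.length \ B → X := fun x i _ =>
    c (fw f (w.take i) x)
  have hinj : Set.InjOn code E := by
    intro x hx y hy hxy
    by_contra hne
    obtain ⟨i, hi, hlt⟩ := hE x hx y hy hne
    refine hlt.not_ge ?_
    by_cases hiB : i ∈ B
    · exact hB x hx y hy i hiB
    have hci : c (fw f (w.take i) x) = c (fw f (w.take i) y) :=
      congrFun (congrFun hxy i) (mem_sdiff.2 ⟨mem_range.2 hi, hiB⟩)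
    calc dist (fw f (w.take i) x) (fw f (w.take i) y)
        ≤ dist (fw f (w.take i) x) (c (fw f (w.take i) x)) +
            dist (fw f (w.take i) y) (c (fw f (w.take i) y)) := by
          rw [hci, dist_comm (fw f (w.take i) y)]; exact dist_triangle _ _ _
      _ ≤ ε / 2 + ε / 2 := add_le_add (hc _) (hc _)
      _ = ε := add_halves ε
  calc #E ≤ #((range w.length \ B).pi fun _ => s) :=
        card_le_card_of_injOn code (fun x _ => mem_pi.2 fun i _ => hcs _) hinj
    _ = #s ^ #(range w.length \ B) := by rw [card_pi, prod_const]

theorem exists_sep0_span0 [CompactSpace X] (w : List ι) {ε : ℝ} (hε : 0 < ε) :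
    ∃ E : Finset X, sep0 f w ε E ∧ span0 f w ε E := by
  classical
  obtain ⟨s, hs⟩ := exists_finset_forall_exists_dist_le X (half_pos hε)
  -- a separated set of maximal cardinality spans
  let S : Set ℕ := {k | ∃ E : Finset X, sep0 f w ε E ∧ #E = k}
  have hSbdd : BddAbove S := ⟨#s ^ w.length, by
    rintro _ ⟨E, hE, rfl⟩
    simpa using card_le_of_sep0 (B := ∅) hE hs (by simp)⟩
  obtain ⟨E, hE, hEcard⟩ : sSup S ∈ S := Nat.sSup_mem ⟨0, ∅, by simp [sep0]⟩ hSbdd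
  refine ⟨E, hE, fun x => ?_⟩
  by_contra! hfar
  have hxE : x ∉ E := fun hx => by
    obtain ⟨i, -, hi⟩ := hfar x hx
    rw [dist_self] at hi
    exact lt_asymm hε hi
  have hsep : sep0 f w ε (insert x E) := by
    intro a ha b hb hab
    rcases mem_insert.1 ha with rfl | haE <;> rcases mem_insert.1 hb with rfl | hbE
    · exact absurd rfl hab
    · exact hfar b hbE
    · obtain ⟨i, hi, hlt⟩ := hfar a haE
      exact ⟨i, hi, by rwa [dist_comm]⟩
    · exact hE a haE b hbE hab
  have := le_csSup hSbdd ⟨insert x E, hsep, rfl⟩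
  rw [card_insert_of_notMem hxE, ← hEcard] at this
  omega

theorem sum_exp_Sw_le_of_sep0 {w : List ι} {ε V D : ℝ} {k : ℕ} {G s : Finset X}
    {A : Finset ℕ} {y : X} (hG : sep0 f w ε G) (hs : ∀ x, ∃ c ∈ s, dist x c ≤ ε / 2)
    (hA : A ⊆ range w.length) (hAk : w.length - #A ≤ k)
    (hV : ∀ a b : X, dist a b ≤ ε / 2 → φ a - φ b ≤ V)
    (hD : ∀ a b : X, φ a - φ b ≤ D)
    (hV0 : 0 ≤ V) (hD0 : 0 ≤ D)
    (hGy : ∀ x ∈ G, ∀ i ∈ A, dist (fw f (w.take i) x) (fw f (w.take i) y) ≤ ε / 2) :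
    ∑ x ∈ G, Real.exp (Sw f φ w x) ≤
      #s ^ k * Real.exp (w.length * V + k * D) * Real.exp (Sw f φ w y) := by
  have hcompl : #(range w.length \ A) ≤ k := by rwa [card_sdiff_of_subset hA, card_range]
  have hSw : ∀ x ∈ G, Sw f φ w x ≤ Sw f φ w y + (w.length * V + k * D) := by
    intro x hx
    have hA' : (#A : ℝ) ≤ w.length := by
      exact_mod_cast (card_le_card hA).trans_eq (card_range _)
    have hcompl' : (#(range w.length \ A) : ℝ) ≤ k := by exact_mod_cast hcompl
    have := Sw_sub_Sw_le hA hV hD (hGy x hx)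
    nlinarith
  have hcard : #G ≤ #s ^ k := by
    rcases G.eq_empty_or_nonempty with rfl | ⟨x, -⟩
    · simp
    obtain ⟨c, hc, -⟩ := hs x
    refine (card_le_of_sep0 hG hs fun x hx x' hx' i hi => ?_).trans
      (Nat.pow_le_pow_right (card_pos.2 ⟨c, hc⟩) hcompl)
    calc _ ≤ dist (fw f (w.take i) x) (fw f (w.take i) y) +
          dist (fw f (w.take i) x') (fw f (w.take i) y) := dist_triangle_right _ _ _
      _ ≤ ε / 2 + ε / 2 := add_le_add (hGy x hx i hi) (hGy x' hx' i hi)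
      _ = ε := add_halves ε
  calc ∑ x ∈ G, Real.exp (Sw f φ w x)
      ≤ ∑ _x ∈ G, Real.exp (Sw f φ w y + (w.length * V + k * D)) :=
        sum_le_sum fun x hx => Real.exp_le_exp.2 (hSw x hx)
    _ = #G * (Real.exp (w.length * V + k * D) * Real.exp (Sw f φ w y)) := by
        rw [sum_const, nsmul_eq_mul, Real.exp_add, mul_comm (Real.exp (Sw f φ w y))]
    _ ≤ #s ^ k * (Real.exp (w.length * V + k * D) * Real.exp (Sw f φ w y)) := by
        gcongr; exact_mod_cast hcard
    _ = _ := by ring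

theorem sum_exp_Sw_le_of_sep0_of_rSpan {w : List ι} {ε r V D : ℝ} {E F s : Finset X}
    (hE : sep0 f w ε E) (hF : rSpan f w (ε / 2) r F)
    (hs : ∀ x, ∃ c ∈ s, dist x c ≤ ε / 2)
    (hV : ∀ a b : X, dist a b ≤ ε / 2 → φ a - φ b ≤ V)
    (hD : ∀ a b : X, φ a - φ b ≤ D)
    (hV0 : 0 ≤ V) (hD0 : 0 ≤ D) :
    ∑ x ∈ E, Real.exp (Sw f φ w x) ≤
      #{A ∈ (range w.length).powerset | w.length - #A ≤ ⌊r * w.length⌋₊} *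
        #s ^ ⌊r * w.length⌋₊ * Real.exp (w.length * V + ⌊r * w.length⌋₊ * D) *
        ∑ y ∈ F, Real.exp (Sw f φ w y) := by
  classical
  set n := w.length
  set k := ⌊r * n⌋₊
  set 𝒜 := {A ∈ (range n).powerset | n - #A ≤ k}
  choose y hyF hy using hF
  let A : X → Finset ℕ := fun x =>
    {i ∈ range n | dist (fw f (w.take i) x) (fw f (w.take i) (y x)) < ε / 2}
  have hmaps : ∀ x ∈ E, (y x, A x) ∈ F ×ˢ 𝒜 := by
    intro x _
    refine mem_product.2 ⟨hyF x, mem_filter.2 ⟨mem_powerset.2 (filter_subset _ _), ?_⟩⟩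
    have hAn : #(A x) ≤ n := (card_filter_le _ _).trans_eq (card_range n)
    refine Nat.le_floor ?_
    push_cast [hAn]
    linarith [hy x]
  calc ∑ x ∈ E, Real.exp (Sw f φ w x)
      = ∑ p ∈ F ×ˢ 𝒜, ∑ x ∈ E with (y x, A x) = p, Real.exp (Sw f φ w x) :=
        (sum_fiberwise_of_maps_to hmaps _).symm
    _ ≤ ∑ p ∈ F ×ˢ 𝒜, #s ^ k * Real.exp (n * V + k * D) * Real.exp (Sw f φ w p.1) := by
        refine sum_le_sum fun p hp => ?_
        obtain ⟨-, hp𝒜⟩ := mem_product.1 hp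
        obtain ⟨hpn, hpk⟩ := mem_filter.1 hp𝒜
        refine sum_exp_Sw_le_of_sep0 (hE.subset (filter_subset _ _)) hs
          (mem_powerset.1 hpn) hpk hV hD hV0 hD0 fun x hx i hi => ?_
        obtain ⟨-, hxp⟩ := mem_filter.1 hx
        rw [← hxp] at hi ⊢
        exact (mem_filter.1 hi).2.le
    _ = #𝒜 * #s ^ k * Real.exp (n * V + k * D) * ∑ y ∈ F, Real.exp (Sw f φ w y) := by
        rw [sum_product, mul_sum]
        simp only [sum_const, nsmul_eq_mul]
        exact sum_congr rfl fun _ _ => by ring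

theorem Qw0_le_mul_Qw [CompactSpace X] (hf : ∀ i, Continuous (f i)) {w : List ι}
    (hw : w ≠ []) {ε r V D : ℝ} (hε : 0 < ε) (hr : 0 < r) {s : Finset X}
    (hs : ∀ x, ∃ c ∈ s, dist x c ≤ ε / 2)
    (hV : ∀ a b : X, dist a b ≤ ε / 2 → φ a - φ b ≤ V)
    (hD : ∀ a b : X, φ a - φ b ≤ D)
    (hV0 : 0 ≤ V) (hD0 : 0 ≤ D) :
    Qw0 f φ w ε ≤
      #{A ∈ (range w.length).powerset | w.length - #A ≤ ⌊r * w.length⌋₊} *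
        #s ^ ⌊r * w.length⌋₊ * Real.exp (w.length * V + ⌊r * w.length⌋₊ * D) *
        Qw f φ w (ε / 2) r := by
  set C : ℝ := #{A ∈ (range w.length).powerset | w.length - #A ≤ ⌊r * w.length⌋₊} *
    #s ^ ⌊r * w.length⌋₊ * Real.exp (w.length * V + ⌊r * w.length⌋₊ * D)
  obtain ⟨E, hEsep, hEspan⟩ := exists_sep0_span0 (f := f) w hε
  obtain ⟨F, hF⟩ := exists_span0 hf w (half_pos (half_pos hε))
  calc Qw0 f φ w ε ≤ ∑ x ∈ E, Real.exp (Sw f φ w x) :=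
        csInf_le (bddBelow_setOf_sum_exp _ _) ⟨E, hEspan, rfl⟩
    _ ≤ C * Qw f φ w (ε / 2) r := by
        rw [Qw, ← smul_eq_mul, ← Real.sInf_smul_of_nonneg (by positivity)]
        refine le_csInf ⟨_, Set.smul_mem_smul_set
          ⟨F, hF.rSpan (half_lt_self (half_pos hε)) hr hw, rfl⟩⟩ ?_
        rintro _ ⟨_, ⟨G, hG, rfl⟩, rfl⟩
        exact sum_exp_Sw_le_of_sep0_of_rSpan hEsep hG hs hV hD hV0 hD0

end Counting

theorem card_mul_pow_mul_exp_le_exp {x : ℝ} (hx0 : 0 < x) (hx1 : x < 1) {r V D : ℝ}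
    (hr : 0 ≤ r) (hD0 : 0 ≤ D) {N : ℕ} (hN : 0 < N) (n : ℕ) :
    #{A ∈ (range n).powerset | n - #A ≤ ⌊r * n⌋₊} * (N : ℝ) ^ ⌊r * n⌋₊ *
        Real.exp (n * V + ⌊r * n⌋₊ * D) ≤
      Real.exp (n * (r * (Real.log x⁻¹ + Real.log N + D) + Real.log (1 - x)⁻¹ + V)) := by
  set k := ⌊r * n⌋₊
  have hk : (k : ℝ) ≤ r * n := Nat.floor_le (by positivity)
  have pow_eq_exp : ∀ {a : ℝ}, 0 < a → ∀ j : ℕ, a ^ j = Real.exp (j * Real.log a) :=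
    fun ha j => by rw [Real.exp_nat_mul, Real.exp_log ha]
  have hL : 0 ≤ Real.log x⁻¹ + Real.log N + D := by
    have : 1 ≤ x⁻¹ := one_le_inv₀ hx0 |>.2 hx1.le
    have : (1 : ℝ) ≤ N := by exact_mod_cast hN
    have := Real.log_nonneg ‹1 ≤ x⁻¹›
    have := Real.log_nonneg ‹(1 : ℝ) ≤ N›
    linarith
  calc _ ≤ x⁻¹ ^ k * (1 - x)⁻¹ ^ n * (N : ℝ) ^ k * Real.exp (n * V + k * D) := by
        gcongr; exact card_powerset_range_filter_le hx0 hx1 n k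
    _ = Real.exp (k * (Real.log x⁻¹ + Real.log N + D) + n * (Real.log (1 - x)⁻¹ + V)) := by
        rw [pow_eq_exp (inv_pos.2 hx0), pow_eq_exp (inv_pos.2 (sub_pos.2 hx1)),
          pow_eq_exp (Nat.cast_pos.2 hN), ← Real.exp_add, ← Real.exp_add, ← Real.exp_add]
        ring_nf
    _ ≤ _ := Real.exp_le_exp.2 (by nlinarith)

section Pressure

variable {X ι : Type*} [MetricSpace X] [Fintype ι] {f : ι → X → X} {φ : X → ℝ}

theorem Qn_eq_wordAvg (n : ℕ) (ε r : ℝ) :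
    Qn f φ n ε r = wordAvg (fun w => Qw f φ w ε r) n := rfl

theorem Qn0_eq_wordAvg (n : ℕ) (ε : ℝ) :
    Qn0 f φ n ε = wordAvg (fun w => Qw0 f φ w ε) n := rfl

theorem Pr_eq_iSup_growthRate (r : ℝ) :
    Pr f φ r = ⨆ ε ∈ Set.Ioi (0 : ℝ), growthRate fun n => Qn f φ n ε r := rfl

theorem P0_eq_iSup_growthRate :
    P0 f φ = ⨆ ε ∈ Set.Ioi (0 : ℝ), growthRate fun n => Qn0 f φ n ε := rfl

theorem Qn_eq_zero_of_isEmpty (h : IsEmpty ι ∨ IsEmpty X) {n : ℕ} (hn : 1 ≤ n) (ε r : ℝ) :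
    Qn f φ n ε r = 0 := by
  rw [Qn_eq_wordAvg]
  rcases h with hι | hX
  · exact wordAvg_eq_zero_of_isEmpty _ hn
  · exact wordAvg_eq_zero fun _ _ => sInf_setOf_sum_exp_of_isEmpty (fun x => isEmptyElim x) _

theorem Qn0_eq_zero_of_isEmpty (h : IsEmpty ι ∨ IsEmpty X) {n : ℕ} (hn : 1 ≤ n) (ε : ℝ) :
    Qn0 f φ n ε = 0 := by
  rw [Qn0_eq_wordAvg]
  rcases h with hι | hX
  · exact wordAvg_eq_zero_of_isEmpty _ hn
  · exact wordAvg_eq_zero fun _ _ => sInf_setOf_sum_exp_of_isEmpty (fun x => isEmptyElim x) _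

theorem Pr_eq_zero_of_isEmpty (h : IsEmpty ι ∨ IsEmpty X) (r : ℝ) : Pr f φ r = 0 := by
  have hzero : ∀ ε, (growthRate fun n => Qn f φ n ε r) = 0 := fun ε =>
    growthRate_of_eventually_eq_zero
      ((eventually_ge_atTop 1).mono fun _ hn => Qn_eq_zero_of_isEmpty h hn ε r)
  simp only [Pr_eq_iSup_growthRate, hzero]
  exact biSup_const Set.nonempty_Ioi

theorem P0_eq_zero_of_isEmpty (h : IsEmpty ι ∨ IsEmpty X) : P0 f φ = 0 := by
  have hzero : ∀ ε, (growthRate fun n => Qn0 f φ n ε) = 0 := fun ε =>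
    growthRate_of_eventually_eq_zero
      ((eventually_ge_atTop 1).mono fun _ hn => Qn0_eq_zero_of_isEmpty h hn ε)
  simp only [P0_eq_iSup_growthRate, hzero]
  exact biSup_const Set.nonempty_Ioi

variable [CompactSpace X]

theorem Qn_le_Qn0 (hf : ∀ i, Continuous (f i)) {n : ℕ} (hn : 1 ≤ n) {ε ε' r : ℝ}
    (hε' : 0 < ε') (hεε' : ε' < ε) (hr : 0 < r) : Qn f φ n ε r ≤ Qn0 f φ n ε' := by
  rw [Qn_eq_wordAvg, Qn0_eq_wordAvg]
  exact wordAvg_mono fun _ hw => Qw_le_Qw0 hf (List.ne_nil_of_length_pos (by omega)) hε' hεε' hr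

theorem Qn0_anti (hf : ∀ i, Continuous (f i)) (n : ℕ) {ε ε' : ℝ} (hε : 0 < ε)
    (hεε' : ε ≤ ε') : Qn0 f φ n ε' ≤ Qn0 f φ n ε := by
  rw [Qn0_eq_wordAvg, Qn0_eq_wordAvg]
  exact wordAvg_mono fun w _ => Qw0_anti hf w hε hεε'

theorem Qn0_le_exp_mul_Qn (hf : ∀ i, Continuous (f i)) {n : ℕ} (hn : 1 ≤ n) {ε r x V D : ℝ}
    (hε : 0 < ε) (hr : 0 < r) (hx0 : 0 < x) (hx1 : x < 1) {s : Finset X} (hs_pos : 0 < #s)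
    (hs : ∀ x, ∃ c ∈ s, dist x c ≤ ε / 2)
    (hV : ∀ a b : X, dist a b ≤ ε / 2 → φ a - φ b ≤ V)
    (hD : ∀ a b : X, φ a - φ b ≤ D)
    (hV0 : 0 ≤ V) (hD0 : 0 ≤ D) :
    Qn0 f φ n ε ≤
      Real.exp (n * (r * (Real.log x⁻¹ + Real.log #s + D) + Real.log (1 - x)⁻¹ + V)) *
        Qn f φ n (ε / 2) r := by
  rw [Qn0_eq_wordAvg, Qn_eq_wordAvg, ← wordAvg_const_mul]
  refine wordAvg_mono fun w hw => ?_
  have hQw : 0 ≤ Qw f φ w (ε / 2) r :=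
    Real.sInf_nonneg (by rintro _ ⟨F, -, rfl⟩; positivity)
  calc Qw0 f φ w ε ≤ _ :=
        Qw0_le_mul_Qw hf (List.ne_nil_of_length_pos (by omega)) hε hr hs hV hD hV0 hD0
    _ ≤ _ := by
        rw [hw]
        gcongr
        exact card_mul_pow_mul_exp_le_exp hx0 hx1 hr.le hD0 hs_pos n

variable [Nonempty X]

theorem Qn_pos [Nonempty ι] (hf : ∀ i, Continuous (f i)) (hφ : Continuous φ) {n : ℕ}
    (hn : 1 ≤ n) {ε r : ℝ} (hε : 0 < ε) (hr : 0 < r) : 0 < Qn f φ n ε r := by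
  rw [Qn_eq_wordAvg]
  exact wordAvg_pos fun _ hw => Qw_pos hf hφ (List.ne_nil_of_length_pos (by omega)) hε hr

theorem Qn0_pos [Nonempty ι] (hf : ∀ i, Continuous (f i)) (hφ : Continuous φ) (n : ℕ)
    {ε : ℝ} (hε : 0 < ε) : 0 < Qn0 f φ n ε := by
  rw [Qn0_eq_wordAvg]
  exact wordAvg_pos fun w _ => Qw0_pos hf hφ w hε

variable [Nonempty ι]

theorem Pr_le_P0 (hf : ∀ i, Continuous (f i)) (hφ : Continuous φ) {r : ℝ} (hr : 0 < r) :
    Pr f φ r ≤ P0 f φ := by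
  rw [Pr_eq_iSup_growthRate, P0_eq_iSup_growthRate]
  refine iSup₂_le fun ε hε => ?_
  calc (growthRate fun n => Qn f φ n ε r) ≤ growthRate fun n => Qn0 f φ n (ε / 2) :=
        growthRate_mono ((eventually_ge_atTop 1).mono fun _ hn => Qn_pos hf hφ hn hε hr)
          ((eventually_ge_atTop 1).mono fun _ hn =>
            Qn_le_Qn0 hf hn (half_pos hε) (half_lt_self hε) hr)
    _ ≤ ⨆ ε ∈ Set.Ioi (0 : ℝ), growthRate fun n => Qn0 f φ n ε :=
        le_iSup₂_of_le (ε / 2) (Set.mem_Ioi.2 (half_pos hε)) le_rfl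

theorem growthRate_Qn0_anti (hf : ∀ i, Continuous (f i)) (hφ : Continuous φ) {ε ε' : ℝ}
    (hε : 0 < ε) (hεε' : ε ≤ ε') :
    (growthRate fun n => Qn0 f φ n ε') ≤ growthRate fun n => Qn0 f φ n ε :=
  growthRate_mono (Eventually.of_forall fun n => Qn0_pos hf hφ n (hε.trans_le hεε'))
    (Eventually.of_forall fun n => Qn0_anti hf n hε hεε')

theorem growthRate_Qn0_le_Pr_add (hf : ∀ i, Continuous (f i)) (hφ : Continuous φ)
    {ε r x V D : ℝ} (hε : 0 < ε) (hr : 0 < r) (hx0 : 0 < x) (hx1 : x < 1) {s : Finset X}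
    (hs : ∀ x, ∃ c ∈ s, dist x c ≤ ε / 2)
    (hV : ∀ a b : X, dist a b ≤ ε / 2 → φ a - φ b ≤ V)
    (hD : ∀ a b : X, φ a - φ b ≤ D)
    (hV0 : 0 ≤ V) (hD0 : 0 ≤ D) :
    (growthRate fun n => Qn0 f φ n ε) ≤
      Pr f φ r +
        ((r * (Real.log x⁻¹ + Real.log #s + D) + Real.log (1 - x)⁻¹ + V : ℝ) : EReal) := by
  have hs_pos : 0 < #s := card_pos.2 (let ⟨c, hc, _⟩ := hs (Classical.arbitrary X); ⟨c, hc⟩)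
  calc (growthRate fun n => Qn0 f φ n ε)
      ≤ (growthRate fun n => Qn f φ n (ε / 2) r) +
          ((r * (Real.log x⁻¹ + Real.log #s + D) + Real.log (1 - x)⁻¹ + V : ℝ) : EReal) :=
        growthRate_le_add (Eventually.of_forall fun n => Qn0_pos hf hφ n hε)
          ((eventually_ge_atTop 1).mono fun _ hn =>
            Qn0_le_exp_mul_Qn hf hn hε hr hx0 hx1 hs_pos hs hV hD hV0 hD0)
    _ ≤ _ := by
        gcongr
        rw [Pr_eq_iSup_growthRate]
        exact le_iSup₂_of_le (ε / 2) (Set.mem_Ioi.2 (half_pos hε)) le_rfl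

theorem eventually_growthRate_Qn0_le_Pr_add (hf : ∀ i, Continuous (f i)) (hφ : Continuous φ)
    {ε η : ℝ} (hε : 0 < ε) (hη : 0 < η) :
    ∀ᶠ r in 𝓝[>] 0, (growthRate fun n => Qn0 f φ n ε) ≤ Pr f φ r + η := by
  obtain ⟨D, hD⟩ : BddAbove (Set.range fun p : X × X => φ p.1 - φ p.2) :=
    (isCompact_range (by fun_prop)).bddAbove
  replace hD : ∀ a b, φ a - φ b ≤ D := fun a b => hD ⟨(a, b), rfl⟩
  have hD0 : 0 ≤ D := by simpa using hD (Classical.arbitrary X) (Classical.arbitrary X)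
  obtain ⟨δ, hδ, hφδ⟩ := Metric.uniformContinuous_iff.1
    (CompactSpace.uniformContinuous_of_continuous hφ) (η / 3) (by positivity)
  set ε' := min ε δ
  have hε' : 0 < ε' := lt_min hε hδ
  have hV : ∀ a b : X, dist a b ≤ ε' / 2 → φ a - φ b ≤ η / 3 := fun a b hab => by
    have := hφδ (hab.trans_lt (by linarith [min_le_right ε δ]))
    rw [Real.dist_eq] at this
    exact (le_abs_self _).trans this.le
  obtain ⟨s, hs⟩ := exists_finset_forall_exists_dist_le X (half_pos hε')
  set x := 1 - Real.exp (-(η / 3))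
  have hx0 : 0 < x := sub_pos.2 (Real.exp_lt_one_iff.2 (by linarith))
  have hx1 : x < 1 := sub_lt_self _ (Real.exp_pos _)
  have hlog : Real.log (1 - x)⁻¹ = η / 3 := by simp [x, Real.log_inv]
  set L := Real.log x⁻¹ + Real.log #s + D
  have hsmall : ∀ᶠ r in 𝓝[>] (0 : ℝ), r * L + η / 3 + η / 3 < η := by
    have : Tendsto (fun r : ℝ => r * L + η / 3 + η / 3) (𝓝[>] 0)
        (𝓝 (0 * L + η / 3 + η / 3)) :=
      ((continuous_id.mul continuous_const).add continuous_const |>.add continuous_const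
        |>.tendsto 0).mono_left nhdsWithin_le_nhds
    exact this.eventually_lt_const (by linarith)
  filter_upwards [self_mem_nhdsWithin, hsmall] with r hr hrη
  calc (growthRate fun n => Qn0 f φ n ε) ≤ growthRate fun n => Qn0 f φ n ε' :=
        growthRate_Qn0_anti hf hφ hε' (min_le_left _ _)
    _ ≤ Pr f φ r + ((r * L + Real.log (1 - x)⁻¹ + η / 3 : ℝ) : EReal) :=
        growthRate_Qn0_le_Pr_add hf hφ hε' hr hx0 hx1 hs hV hD (by positivity) hD0
    _ ≤ Pr f φ r + η := by
        rw [hlog]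
        gcongr

theorem tendsto_Pr_of_nonempty (hf : ∀ i, Continuous (f i)) (hφ : Continuous φ) :
    Tendsto (fun r => Pr f φ r) (𝓝[>] 0) (𝓝 (P0 f φ)) := by
  refine tendsto_order.2 ⟨fun b hb => ?_, fun b hb =>
    eventually_nhdsWithin_of_forall fun r hr => (Pr_le_P0 hf hφ hr).trans_lt hb⟩
  rw [P0_eq_iSup_growthRate] at hb
  obtain ⟨ε, hε, hbε⟩ :
      ∃ ε ∈ Set.Ioi (0 : ℝ), b < growthRate fun n => Qn0 f φ n ε := by
    simpa only [lt_iSup_iff, exists_prop] using hb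
  obtain ⟨γ, hbγ, hγ⟩ := EReal.exists_between_coe_real hbε
  obtain ⟨β, hbβ, hβγ⟩ := EReal.exists_between_coe_real hbγ
  filter_upwards [eventually_growthRate_Qn0_le_Pr_add hf hφ hε
    (sub_pos.2 (EReal.coe_lt_coe_iff.1 hβγ))] with r hr
  refine hbβ.trans_le (not_lt.1 fun hrβ => (hγ.trans_le hr).not_ge ?_)
  calc Pr f φ r + ((γ - β : ℝ) : EReal) ≤ (β : EReal) + ((γ - β : ℝ) : EReal) := by
        gcongr
    _ = γ := by rw [← EReal.coe_add, add_sub_cancel]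

end Pressure

theorem tendsto_Pr_pressure
    {X : Type*} [MetricSpace X] [CompactSpace X] {m : ℕ}
    (f : Fin m → X → X) (hf : ∀ i, Continuous (f i))
    (φ : X → ℝ) (hφ : Continuous φ) :
    Filter.Tendsto (fun r : ℝ => Pr f φ r)
      (nhdsWithin (0 : ℝ) (Set.Ioi 0)) (nhds (P0 f φ)) := by
  by_cases h : IsEmpty (Fin m) ∨ IsEmpty X
  · simp only [Pr_eq_zero_of_isEmpty h, P0_eq_zero_of_isEmpty h]
    exact tendsto_const_nhds
  · obtain ⟨hι, hX⟩ := not_or.1 h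
    rw [not_isEmpty_iff] at hι hX
    exact tendsto_Pr_of_nonempty hf hφ
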